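/- arXiv:1902.03863 — 2 statements merged into one kernel-verified Lean document; each statement's English description precedes it below -/
import Mathlib

section
/- Let n ≥ 2 and 0 ≤ k < n be integers, 1 ≤ p, q < ∞, and δ ∈ (0,1). Then for every real N > 6 there exists a nonzero f ∈ L^p(ℝ^n) (namely the indicator of an axis-parallel cube of side length N) such that ‖M^k_δ f‖_{L^q(ℝ^n)} ≥ (N−6)^{n/q} · N^{−n/p} · ‖f‖_{L^p(ℝ^n)}. In particular, ‖M^k_δ‖_{L^p→L^q} ≥ (N−6)^{n/q} N^{−n/p} for all N > 6. -/
open MeasureTheory Metric Set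

noncomputable section

/-- A `k`-face of the axis-parallel cube in `ℝⁿ` with center `x` and side length `2r`:
the coordinates `j ∈ S` (with `#S = n - k`) are fixed at `x j ± r` (sign given by `ε j`),
the remaining coordinates range over `[x j - r, x j + r]`. -/
def kFace {n : ℕ} (x : Fin n → ℝ) (r : ℝ) (S : Finset (Fin n)) (ε : Fin n → Bool) :
    Set (Fin n → ℝ) :=
  {y | (∀ j ∈ S, y j = x j + (if ε j then r else -r)) ∧ ∀ j ∉ S, |y j - x j| ≤ r}

/-- The `k`-skeleton `S_k(x,r)` of the axis-parallel cube with center `x` and side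
length `2r`: the union of all its `k`-faces. -/
def skeleton (n k : ℕ) (x : Fin n → ℝ) (r : ℝ) : Set (Fin n → ℝ) :=
  ⋃ (S : Finset (Fin n)) (_ : S.card = n - k) (ε : Fin n → Bool), kFace x r S ε

/-- The `k`-skeleton maximal operator with width `δ`:
`M^k_δ f (x) = sup_{1 ≤ r ≤ 2} min_j ⨍_{S^j_{k,δ}(x,r)} |f|`, the minimum being taken
over all `k`-faces of the cube with center `x` and side length `2r`, each face thickened
by `δ` in the `ℓ∞` metric (which is the sup metric on `Fin n → ℝ`). -/
def skelMax (n k : ℕ) (δ : ℝ) (f : (Fin n → ℝ) → ℝ) (x : Fin n → ℝ) : ℝ :=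
  ⨆ r ∈ Set.Icc (1 : ℝ) 2,
    ⨅ (S : {S : Finset (Fin n) // S.card = n - k}) (ε : Fin n → Bool),
      ⨍ y in cthickening δ (kFace x r S.1 ε), |f y|

/-- The unit cube `Q₀ = [0,1)ⁿ`. -/
def Q0 (n : ℕ) : Set (Fin n → ℝ) := Set.univ.pi fun _ => Set.Ico (0 : ℝ) 1

/-- The cube `7Q₀`, concentric with `Q₀` and of side length `7`. -/
def sevenQ0 (n : ℕ) : Set (Fin n → ℝ) := Set.univ.pi fun _ => Set.Icc (-3 : ℝ) 4

/-- The translate by `v` of the coordinate `k`-plane spanned by the basis vectors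
`e_j`, `j ∈ π`. -/
def planeTranslate {n : ℕ} (π : Finset (Fin n)) (v : Fin n → ℝ) : Set (Fin n → ℝ) :=
  {y | ∀ j ∉ π, y j = v j}

/-- Center of the grid cube indexed by `z` in the grid of width `η` on `Q₀`. -/
def gridCenter {n : ℕ} (η : ℝ) {m : ℕ} (z : Fin n → Fin m) : Fin n → ℝ :=
  fun j => η * ((z j : ℝ) + 1 / 2)

/-- Index of the grid cube of width `η` containing `x` (for `x ∈ Q₀`). -/
def zOf {n : ℕ} (η : ℝ) {m : ℕ} (hm : 0 < m) (x : Fin n → ℝ) : Fin n → Fin m :=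
  fun j => ⟨(⌊x j / η⌋).toNat % m, Nat.mod_lt _ hm⟩

/-- The selected `k`-face `ℓᶻ` of the skeleton `S_k(x_z, ρ z)`, where `x_z` is the center
of the grid cube indexed by `z`. -/
def linFace {n : ℕ} (η : ℝ) {m : ℕ} (ρ : (Fin n → Fin m) → ℝ)
    (S : (Fin n → Fin m) → Finset (Fin n)) (ε : (Fin n → Fin m) → Fin n → Bool)
    (z : Fin n → Fin m) : Set (Fin n → ℝ) :=
  kFace (gridCenter η z) (ρ z) (S z) (ε z)

/-- The linearized `k`-skeleton maximal operator `M̃^k_{ρ,η}` of width `η`: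
for `x` in the grid cube indexed by `z`, it averages `|f|` over the closed
`η`-neighborhood (in the `ℓ∞` metric) of the selected face `ℓᶻ`. -/
def linMax {n : ℕ} (η : ℝ) {m : ℕ} (hm : 0 < m) (ρ : (Fin n → Fin m) → ℝ)
    (S : (Fin n → Fin m) → Finset (Fin n)) (ε : (Fin n → Fin m) → Fin n → Bool)
    (f : (Fin n → ℝ) → ℝ) (x : Fin n → ℝ) : ℝ :=
  ⨍ y in cthickening η (linFace η ρ S ε (zOf η hm x)), |f y|

/-- The overlap property for the selected faces: every affine translate `V` of a coordinate
`k`-plane `π` contains at most `C₀ · (#J)^{1 - (n-k)(2n-1)/(2n²)}` of the faces `ℓᶻ`, `z ∈ J`,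
whenever all the faces indexed by `J` are parallel to `π`. -/
def OverlapProp {n : ℕ} (k : ℕ) (η : ℝ) {m : ℕ} (ρ : (Fin n → Fin m) → ℝ)
    (S : (Fin n → Fin m) → Finset (Fin n)) (ε : (Fin n → Fin m) → Fin n → Bool)
    (C0 : ℝ) : Prop :=
  ∀ π : Finset (Fin n), π.card = k →
    ∀ J : Set (Fin n → Fin m),
      (∀ z ∈ J, ∃ v : Fin n → ℝ, linFace η ρ S ε z ⊆ planeTranslate π v) →
      ∀ v : Fin n → ℝ,
        ({z ∈ J | linFace η ρ S ε z ⊆ planeTranslate π v}).ncard ≤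
          C0 * (J.ncard : ℝ) ^ (1 - ((n : ℝ) - k) * (2 * (n : ℝ) - 1) / (2 * (n : ℝ) ^ 2))

/-- Abstract maximal averaging operator `T f (x) = sup_{r ∈ I} ⨍_{A_{x,r}} |f|`. -/
def absMax {n : ℕ} {I : Type*} (A : (Fin n → ℝ) → I → Set (Fin n → ℝ))
    (f : (Fin n → ℝ) → ℝ) (x : Fin n → ℝ) : ℝ :=
  ⨆ r : I, ⨍ y in A x r, |f y|

/-- `goodCount A E lam μ` says: for at least `m/2` of the indices `j`, the subset of
`A j ∩ E` where the multiplicity function `Υ = Σᵢ 1_{Aᵢ ∩ E}` is at most `μ` has measure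
at least `(lam/2)·|A j|`. -/
def goodCount {n m : ℕ} (A : Fin m → Set (Fin n → ℝ)) (E : Set (Fin n → ℝ))
    (lam : ℝ) (μ : ℕ) : Prop :=
  (m : ℝ) / 2 ≤
    ({j : Fin m | ENNReal.ofReal (lam / 2) * volume (A j) ≤
        volume {y ∈ A j ∩ E | ({i : Fin m | y ∈ A i ∩ E}).ncard ≤ μ}}).ncard

/-!
If the `ℓ∞`-ball of radius `3` around `x` lies in a set `Q`, then every `δ`-thickened
`k`-face of every cube of half-side `r ∈ [1, 2]` centred at `x` lies in `Q` (as `δ + r ≤ 3`),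
so all averages of `|1_Q|` in the definition of `M^k_δ 1_Q (x)` equal `1`. For the cube `Q`
of side `N`, this holds on the concentric cube of side `N - 6`, whence
`‖M^k_δ 1_Q‖_q ≥ (N - 6)^{n/q}`, while `‖1_Q‖_p = N^{n/p}`.
-/

namespace SkeletonMaximal

variable {n : ℕ}

def cube (c : Fin n → ℝ) (L : ℝ) : Set (Fin n → ℝ) :=
  univ.pi fun j => Icc (c j - L / 2) (c j + L / 2)

lemma measurableSet_cube (c : Fin n → ℝ) (L : ℝ) : MeasurableSet (cube c L) :=
  MeasurableSet.univ_pi fun _ => measurableSet_Icc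

lemma volume_cube (c : Fin n → ℝ) (L : ℝ) : volume (cube c L) = ENNReal.ofReal L ^ n := by
  rw [cube, volume_pi_pi]
  simp [Real.volume_Icc]

lemma eLpNorm_indicator_one_cube (c : Fin n → ℝ) {L p : ℝ} (hL : 0 ≤ L) (hp : 0 < p) :
    eLpNorm ((cube c L).indicator fun _ => (1 : ℝ)) (ENNReal.ofReal p) volume =
      ENNReal.ofReal (L ^ ((n : ℝ) / p)) := by
  rw [eLpNorm_indicator_const (measurableSet_cube c L) (by simpa using hp) ENNReal.ofReal_ne_top,
    volume_cube, ENNReal.toReal_ofReal hp.le, ← ENNReal.rpow_natCast, ← ENNReal.rpow_mul,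
    ENNReal.ofReal_rpow_of_nonneg hL (by positivity)]
  simp [div_eq_mul_inv]

lemma closedBall_subset_cube {x c : Fin n → ℝ} {L R : ℝ} (hx : x ∈ cube c (L - 2 * R)) :
    closedBall x R ⊆ cube c L := by
  intro y hy j _
  have hyx : |y j - x j| ≤ R := (dist_le_pi_dist y x j).trans (mem_closedBall.1 hy)
  have hxj := hx j (mem_univ j)
  constructor <;> linarith [(abs_le.1 hyx).1, (abs_le.1 hyx).2, hxj.1, hxj.2]

lemma kFace_nonempty (x : Fin n → ℝ) {r : ℝ} (hr : 0 ≤ r) (S : Finset (Fin n))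
    (ε : Fin n → Bool) : (kFace x r S ε).Nonempty :=
  ⟨fun j => if j ∈ S then x j + (if ε j then r else -r) else x j,
    fun j hj => by simp [hj], fun j hj => by simp [hj, hr]⟩

lemma kFace_subset_closedBall (x : Fin n → ℝ) {r : ℝ} (hr : 0 ≤ r) (S : Finset (Fin n))
    (ε : Fin n → Bool) : kFace x r S ε ⊆ closedBall x r := by
  intro y hy
  rw [mem_closedBall, dist_pi_le_iff hr]
  intro j
  rw [Real.dist_eq]
  by_cases hj : j ∈ S
  · rw [hy.1 j hj, add_sub_cancel_left]
    cases ε j <;> simp [abs_of_nonneg hr]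
  · exact hy.2 j hj

lemma cthickening_kFace_subset_closedBall (x : Fin n → ℝ) {r δ : ℝ} (hr : 0 ≤ r) (hδ : 0 ≤ δ)
    (S : Finset (Fin n)) (ε : Fin n → Bool) :
    cthickening δ (kFace x r S ε) ⊆ closedBall x (δ + r) :=
  (cthickening_subset_of_subset δ (kFace_subset_closedBall x hr S ε)).trans
    (cthickening_closedBall hδ hr x).subset

lemma volume_cthickening_kFace_pos (x : Fin n → ℝ) {r δ : ℝ} (hr : 0 ≤ r) (hδ : 0 < δ)
    (S : Finset (Fin n)) (ε : Fin n → Bool) : 0 < volume (cthickening δ (kFace x r S ε)) := by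
  obtain ⟨y, hy⟩ := kFace_nonempty x hr S ε
  exact (measure_closedBall_pos volume y hδ).trans_le
    (measure_mono (closedBall_subset_cthickening hy δ))

lemma volume_cthickening_kFace_lt_top (x : Fin n → ℝ) {r δ : ℝ} (hr : 0 ≤ r) (hδ : 0 ≤ δ)
    (S : Finset (Fin n)) (ε : Fin n → Bool) : volume (cthickening δ (kFace x r S ε)) < ⊤ :=
  (measure_mono (cthickening_kFace_subset_closedBall x hr hδ S ε)).trans_lt
    measure_closedBall_lt_top

lemma setAverage_abs_indicator_one_of_subset {α : Type*} [MeasurableSpace α] {μ : Measure α}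
    {s t : Set α} (ht : MeasurableSet t) (hts : t ⊆ s) (h₀ : μ t ≠ 0) (h_top : μ t ≠ ⊤) :
    ⨍ y in t, |s.indicator (fun _ => (1 : ℝ)) y| ∂μ = 1 := by
  have hone : ∀ y ∈ t, |s.indicator (fun _ => (1 : ℝ)) y| = 1 := fun y hy => by
    rw [indicator_of_mem (hts hy), abs_one]
  rw [setAverage_congr_fun ht (Filter.Eventually.of_forall hone), setAverage_const h₀ h_top]

lemma faceAverage_indicator_eq_one {s : Set (Fin n → ℝ)} {x : Fin n → ℝ} {r δ : ℝ}
    (hr : 0 ≤ r) (hδ : 0 < δ) (hs : closedBall x (δ + r) ⊆ s) (S : Finset (Fin n))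
    (ε : Fin n → Bool) :
    ⨍ y in cthickening δ (kFace x r S ε), |s.indicator (fun _ => (1 : ℝ)) y| = 1 :=
  setAverage_abs_indicator_one_of_subset isClosed_cthickening.measurableSet
    ((cthickening_kFace_subset_closedBall x hr hδ.le S ε).trans hs)
    (volume_cthickening_kFace_pos x hr hδ S ε).ne'
    (volume_cthickening_kFace_lt_top x hr hδ.le S ε).ne

lemma skelMax_eq_of_forall_faceAverage_eq {k : ℕ} {δ c : ℝ} {f : (Fin n → ℝ) → ℝ}
    {x : Fin n → ℝ} (hc : 0 ≤ c)
    (h : ∀ r ∈ Icc (1 : ℝ) 2, ∀ (S : Finset (Fin n)) (ε : Fin n → Bool),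
      ⨍ y in cthickening δ (kFace x r S ε), |f y| = c) :
    skelMax n k δ f x = c := by
  have : Nonempty {S : Finset (Fin n) // S.card = n - k} := by
    obtain ⟨S, -, hS⟩ := Finset.exists_subset_card_eq (s := Finset.univ)
      (by simp : n - k ≤ (Finset.univ : Finset (Fin n)).card)
    exact ⟨⟨S, hS⟩⟩
  have hinf : ∀ r ∈ Icc (1 : ℝ) 2, (⨅ (S : {S : Finset (Fin n) // S.card = n - k})
      (ε : Fin n → Bool), ⨍ y in cthickening δ (kFace x r S.1 ε), |f y|) = c := by
    intro r hr
    simp only [h r hr, ciInf_const]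
  have hinner : ∀ r : ℝ, (⨆ _ : r ∈ Icc (1 : ℝ) 2, ⨅ (S : {S : Finset (Fin n) // S.card = n - k})
      (ε : Fin n → Bool), ⨍ y in cthickening δ (kFace x r S.1 ε), |f y|) ≤ c :=
    fun r => Real.iSup_le (fun hr => (hinf r hr).le) hc
  have h₁ : (1 : ℝ) ∈ Icc (1 : ℝ) 2 := by norm_num
  refine le_antisymm (Real.iSup_le hinner hc) ?_
  calc c = ⨆ _ : (1 : ℝ) ∈ Icc (1 : ℝ) 2, ⨅ (S : {S : Finset (Fin n) // S.card = n - k})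
        (ε : Fin n → Bool), ⨍ y in cthickening δ (kFace x 1 S.1 ε), |f y| := by
        rw [ciSup_pos h₁, hinf 1 h₁]
    _ ≤ skelMax n k δ f x := le_ciSup ⟨c, forall_mem_range.2 hinner⟩ 1

lemma skelMax_indicator_eq_one (k : ℕ) {δ : ℝ} (hδ : δ ∈ Ioo (0 : ℝ) 1)
    {s : Set (Fin n → ℝ)} {x : Fin n → ℝ} (hs : closedBall x 3 ⊆ s) :
    skelMax n k δ (s.indicator fun _ => (1 : ℝ)) x = 1 := by
  refine skelMax_eq_of_forall_faceAverage_eq zero_le_one fun r hr S ε => ?_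
  have hball : closedBall x (δ + r) ⊆ closedBall x 3 :=
    closedBall_subset_closedBall (by linarith [hδ.2, hr.2])
  exact faceAverage_indicator_eq_one (by linarith [hr.1]) hδ.1 (hball.trans hs) S ε

lemma eLpNorm_indicator_one_le {α : Type*} [MeasurableSpace α] {μ : Measure α}
    {s : Set α} {g : α → ℝ} {p : ENNReal} (hg : ∀ x ∈ s, 1 ≤ g x) :
    eLpNorm (s.indicator fun _ => (1 : ℝ)) p μ ≤ eLpNorm g p μ := by
  refine eLpNorm_mono fun x => ?_
  by_cases hx : x ∈ s
  · rw [indicator_of_mem hx, norm_one, Real.norm_eq_abs]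
    exact (hg x hx).trans (le_abs_self _)
  · rw [indicator_of_notMem hx, norm_zero]
    exact norm_nonneg _

end SkeletonMaximal

open SkeletonMaximal in
theorem skelMax_norm_lower_bound_cube_general (n k : ℕ)
    (p q : ℝ) (hp : 1 ≤ p) (hq : 1 ≤ q) (δ : ℝ) (hδ : δ ∈ Set.Ioo (0 : ℝ) 1) :
    ∀ N : ℝ, 6 < N → ∃ (c : Fin n → ℝ) (f : (Fin n → ℝ) → ℝ),
      f = (Set.univ.pi fun j => Set.Icc (c j - N / 2) (c j + N / 2)).indicator
        (fun _ => (1 : ℝ)) ∧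
      MemLp f (ENNReal.ofReal p) volume ∧
      eLpNorm f (ENNReal.ofReal p) volume ≠ 0 ∧
      ENNReal.ofReal ((N - 6) ^ ((n : ℝ) / q) * N ^ (-(n : ℝ) / p)) *
          eLpNorm f (ENNReal.ofReal p) volume ≤
        eLpNorm (skelMax n k δ f) (ENNReal.ofReal q) volume := by
  intro N hN
  have hp₀ : 0 < p := by linarith
  have hN₀ : 0 < N := by linarith
  have hnorm := eLpNorm_indicator_one_cube (0 : Fin n → ℝ) hN₀.le hp₀
  have hlarge : ∀ x ∈ cube (0 : Fin n → ℝ) (N - 6),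
      1 ≤ skelMax n k δ ((cube 0 N).indicator fun _ => (1 : ℝ)) x := fun x hx =>
    (skelMax_indicator_eq_one k hδ (closedBall_subset_cube (by rwa [show N - 2 * 3 = N - 6 by ring]))).ge
  refine ⟨0, (cube 0 N).indicator fun _ => 1, rfl,
    memLp_indicator_const _ (measurableSet_cube 0 N) 1 (Or.inr (by simp [volume_cube])), ?_, ?_⟩
  · rw [hnorm]
    simpa using Real.rpow_pos_of_pos hN₀ _
  rw [hnorm]
  calc ENNReal.ofReal ((N - 6) ^ ((n : ℝ) / q) * N ^ (-(n : ℝ) / p)) *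
        ENNReal.ofReal (N ^ ((n : ℝ) / p))
      = ENNReal.ofReal ((N - 6) ^ ((n : ℝ) / q)) := by
        rw [← ENNReal.ofReal_mul (by positivity), mul_assoc, ← Real.rpow_add hN₀, neg_div,
          neg_add_cancel, Real.rpow_zero, mul_one]
    _ = eLpNorm ((cube (0 : Fin n → ℝ) (N - 6)).indicator fun _ => (1 : ℝ))
        (ENNReal.ofReal q) volume :=
        (eLpNorm_indicator_one_cube 0 (by linarith) (by linarith)).symm
    _ ≤ _ := eLpNorm_indicator_one_le hlarge

/-- for every `N > 6` the indicator of an axis-parallel cube of side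
length `N` is a nonzero `f ∈ L^p` witnessing
`‖M^k_δ f‖_{L^q} ≥ (N-6)^{n/q} N^{-n/p} ‖f‖_{L^p}`; in particular
`‖M^k_δ‖_{L^p → L^q} ≥ (N-6)^{n/q} N^{-n/p}`. -/
theorem skelMax_norm_lower_bound_cube (n k : ℕ) (hn : 2 ≤ n) (hk : k < n)
    (p q : ℝ) (hp : 1 ≤ p) (hq : 1 ≤ q) (δ : ℝ) (hδ : δ ∈ Set.Ioo (0 : ℝ) 1) :
    ∀ N : ℝ, 6 < N → ∃ (c : Fin n → ℝ) (f : (Fin n → ℝ) → ℝ),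
      f = (Set.univ.pi fun j => Set.Icc (c j - N / 2) (c j + N / 2)).indicator
        (fun _ => (1 : ℝ)) ∧
      MemLp f (ENNReal.ofReal p) volume ∧
      eLpNorm f (ENNReal.ofReal p) volume ≠ 0 ∧
      ENNReal.ofReal ((N - 6) ^ ((n : ℝ) / q) * N ^ (-(n : ℝ) / p)) *
          eLpNorm f (ENNReal.ofReal p) volume ≤
        eLpNorm (skelMax n k δ f) (ENNReal.ofReal q) volume :=
  skelMax_norm_lower_bound_cube_general n k p q hp hq δ hδ
end
end

section
/- Let n ≥ 2 and 0 ≤ k < n be integers, δ ∈ (0,1), and x_0 ∈ ℝ^n. Let B = S_k(x_0, 1) be the k-skeleton of the axis-parallel cube with center x_0 and side length 2, and let B_{6δ} be the closed 6δ-neighborhood of B in the ℓ∞ metric. Then for every x ∈ ℝ^n with ‖x − x_0‖_∞ ≤ δ, M^k_δ 1_{B_{6δ}}(x) ≥ 1. -/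
open MeasureTheory Metric Set

noncomputable section

/-! At radius `1` the cube centred at `x` is the cube centred at `x₀` translated by at most `δ`,
so every `δ`-thickened face of it lies in the `2δ`-neighbourhood of `S_k(x₀, 1) ⊆ B_{6δ}`. The
indicator of `B_{6δ}` therefore averages to `1` on each of these faces, and since no average of
the indicator exceeds `1`, the supremum over `r` is at least its value at `r = 1`. -/

namespace Real

/-- `⨅` of an empty or unbounded-below family of reals is `0`, whence `0 ≤ C`. -/
theorem iInf_le_of_forall_le {ι : Sort*} {f : ι → ℝ} {C : ℝ} (hf : ∀ i, f i ≤ C) (hC : 0 ≤ C) :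
    ⨅ i, f i ≤ C := by
  by_cases hb : BddBelow (range f)
  · rcases isEmpty_or_nonempty ι with _ | ⟨⟨i⟩⟩
    · simpa using hC
    · exact (ciInf_le hb i).trans (hf i)
  · rw [Real.iInf_of_not_bddBelow hb]
    exact hC

end Real

section Average

variable {α E : Type*} [MeasurableSpace α] [NormedAddCommGroup E] [NormedSpace ℝ E]
  {μ : Measure α}

theorem norm_average_le_of_norm_le_const {f : α → E} {C : ℝ} (hC : 0 ≤ C)
    (hf : ∀ᵐ x ∂μ, ‖f x‖ ≤ C) : ‖⨍ x, f x ∂μ‖ ≤ C := by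
  rcases (le_top : μ univ ≤ ⊤).eq_or_lt with hμ | hμ
  · simp [average_eq, measureReal_def, hμ, hC]
  have : IsFiniteMeasure μ := ⟨hμ⟩
  rw [average_eq, norm_smul, norm_inv, Real.norm_of_nonneg measureReal_nonneg]
  calc (μ.real univ)⁻¹ * ‖∫ x, f x ∂μ‖ ≤ (μ.real univ)⁻¹ * (C * μ.real univ) := by
        gcongr
        exact norm_integral_le_of_norm_le_const hf
    _ ≤ C := by
        rcases eq_or_ne (μ.real univ) 0 with h0 | h0
        · simpa [h0] using hC
        · rw [mul_comm C, ← mul_assoc, inv_mul_cancel₀ h0, one_mul]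

theorem setAverage_eq_of_eqOn [CompleteSpace E] {s : Set α} (hs : MeasurableSet s)
    (h0 : μ s ≠ 0) (hμ : μ s ≠ ⊤) {f : α → E} {c : E} (hf : EqOn f (fun _ => c) s) :
    ⨍ x in s, f x ∂μ = c := by
  rw [setAverage_congr_fun hs (ae_of_all _ hf), setAverage_const h0 hμ]

end Average

theorem measure_cthickening_pos {α : Type*} [PseudoMetricSpace α] [MeasurableSpace α]
    [OpensMeasurableSpace α] (μ : Measure α) [μ.IsOpenPosMeasure] {s : Set α}
    (hs : s.Nonempty) {δ : ℝ} (hδ : 0 < δ) : 0 < μ (cthickening δ s) := by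
  obtain ⟨y, hy⟩ := hs
  exact (measure_ball_pos μ y hδ).trans_le
    (measure_mono (ball_subset_closedBall.trans (closedBall_subset_cthickening hy δ)))

theorem nonempty_finset_card_eq {α : Type*} [Fintype α] {m : ℕ} (hm : m ≤ Fintype.card α) :
    Nonempty {S : Finset α // S.card = m} := by
  obtain ⟨S, -, hS⟩ := Finset.exists_subset_card_eq (s := (Finset.univ : Finset α)) (n := m)
    (by rwa [Finset.card_univ])
  exact ⟨⟨S, hS⟩⟩

section KFace

variable {n : ℕ} {r : ℝ} {S : Finset (Fin n)} {ε : Fin n → Bool}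

theorem kFace_subset_closedBall (x : Fin n → ℝ) (hr : 0 ≤ r) :
    kFace x r S ε ⊆ closedBall x r := by
  intro y hy
  refine (dist_pi_le_iff hr).2 fun j => ?_
  rw [Real.dist_eq]
  by_cases hj : j ∈ S
  · rw [hy.1 j hj, add_sub_cancel_left]
    cases ε j <;> simp [abs_of_nonneg hr]
  · exact hy.2 j hj

theorem isBounded_kFace (x : Fin n → ℝ) (hr : 0 ≤ r) : Bornology.IsBounded (kFace x r S ε) :=
  isBounded_closedBall.subset (kFace_subset_closedBall x hr)

theorem kFace_nonempty (x : Fin n → ℝ) (hr : 0 ≤ r) : (kFace x r S ε).Nonempty := by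
  refine ⟨fun j => x j + (if ε j then r else -r), fun j _ => rfl, fun j _ => ?_⟩
  rw [add_sub_cancel_left]
  cases ε j <;> simp [abs_of_nonneg hr]

theorem sub_add_mem_kFace {x x₀ y : Fin n → ℝ} (hy : y ∈ kFace x r S ε) :
    y - x + x₀ ∈ kFace x₀ r S ε := by
  refine ⟨fun j hj => ?_, fun j hj => ?_⟩
  · simp only [Pi.add_apply, Pi.sub_apply, hy.1 j hj]
    ring
  · simpa using hy.2 j hj

theorem kFace_subset_cthickening_kFace {x x₀ : Fin n → ℝ} {c : ℝ} (hx : dist x x₀ ≤ c) :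
    kFace x r S ε ⊆ cthickening c (kFace x₀ r S ε) := fun y hy =>
  mem_cthickening_of_dist_le y _ c _ (sub_add_mem_kFace hy) <| by
    rwa [dist_eq_norm, sub_add_eq_sub_sub, sub_sub_cancel, ← dist_eq_norm]

theorem kFace_subset_skeleton {k : ℕ} (x : Fin n → ℝ) (r : ℝ) (hS : S.card = n - k) :
    kFace x r S ε ⊆ skeleton n k x r :=
  subset_iUnion_of_subset S <| subset_iUnion_of_subset hS <| subset_iUnion (kFace x r S) ε

theorem cthickening_kFace_subset_cthickening_skeleton {k : ℕ} {x x₀ : Fin n → ℝ} {δ : ℝ}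
    (hδ : 0 ≤ δ) (hS : S.card = n - k) :
    cthickening δ (kFace x r S ε) ⊆ cthickening (δ + dist x x₀) (skeleton n k x₀ r) :=
  calc cthickening δ (kFace x r S ε)
      ⊆ cthickening δ (cthickening (dist x x₀) (kFace x₀ r S ε)) :=
        cthickening_subset_of_subset δ (kFace_subset_cthickening_kFace le_rfl)
    _ ⊆ cthickening (δ + dist x x₀) (kFace x₀ r S ε) :=
        cthickening_cthickening_subset hδ dist_nonneg _
    _ ⊆ cthickening (δ + dist x x₀) (skeleton n k x₀ r) :=
        cthickening_subset_of_subset _ (kFace_subset_skeleton x₀ r hS)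

end KFace

theorem le_skelMax {n k : ℕ} {δ r : ℝ} {f : (Fin n → ℝ) → ℝ} (hf : ∀ y, |f y| ≤ 1)
    (x : Fin n → ℝ) (hr : r ∈ Icc (1 : ℝ) 2) :
    (⨅ (S : {S : Finset (Fin n) // S.card = n - k}) (ε : Fin n → Bool),
      ⨍ y in cthickening δ (kFace x r S.1 ε), |f y|) ≤ skelMax n k δ f x := by
  have havg : ∀ A : Set (Fin n → ℝ), ⨍ y in A, |f y| ≤ 1 := fun A =>
    (le_abs_self _).trans <| (Real.norm_eq_abs _).symm.trans_le <|
      norm_average_le_of_norm_le_const zero_le_one <| ae_of_all _ fun y => by simpa using hf y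
  have hbdd : ∀ r', (⨆ _ : r' ∈ Icc (1 : ℝ) 2, ⨅ (S : {S : Finset (Fin n) // S.card = n - k})
      (ε : Fin n → Bool), ⨍ y in cthickening δ (kFace x r' S.1 ε), |f y|) ≤ 1 := fun r' =>
    Real.iSup_le (fun _ => Real.iInf_le_of_forall_le
      (fun _ => Real.iInf_le_of_forall_le (fun _ => havg _) zero_le_one) zero_le_one) zero_le_one
  exact le_ciSup_of_le ⟨1, forall_mem_range.2 hbdd⟩ r
    (ciSup_pos (f := fun _ : r ∈ Icc (1 : ℝ) 2 => _) hr).ge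

theorem skelMax_indicator_thickened_skeleton_general (n k : ℕ)
    (δ : ℝ) (hδ : δ ∈ Set.Ioo (0 : ℝ) 1) (x₀ : Fin n → ℝ) :
    ∀ x : Fin n → ℝ, dist x x₀ ≤ δ →
      1 ≤ skelMax n k δ
        ((cthickening (6 * δ) (skeleton n k x₀ 1)).indicator fun _ => (1 : ℝ)) x := by
  intro x hx
  set B := cthickening (6 * δ) (skeleton n k x₀ 1)
  have hB : ∀ y, |B.indicator (fun _ => (1 : ℝ)) y| ≤ 1 := fun y => by
    by_cases hy : y ∈ B <;> simp [hy]
  have hface : ∀ (S : {S : Finset (Fin n) // S.card = n - k}) (ε : Fin n → Bool),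
      ⨍ y in cthickening δ (kFace x 1 S.1 ε), |B.indicator (fun _ => (1 : ℝ)) y| = 1 := by
    intro S ε
    have hsub : cthickening δ (kFace x 1 S.1 ε) ⊆ B :=
      (cthickening_kFace_subset_cthickening_skeleton hδ.1.le S.2).trans
        (cthickening_mono (by linarith [hδ.1]) _)
    exact setAverage_eq_of_eqOn isClosed_cthickening.measurableSet
      (measure_cthickening_pos volume (kFace_nonempty x zero_le_one) hδ.1).ne'
      ((isBounded_kFace x zero_le_one).cthickening.measure_lt_top).ne
      fun y hy => by simp [indicator_of_mem (hsub hy)]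
  have := nonempty_finset_card_eq (α := Fin n) (m := n - k) (by simp)
  calc (1 : ℝ) = ⨅ (S : {S : Finset (Fin n) // S.card = n - k}) (ε : Fin n → Bool),
        ⨍ y in cthickening δ (kFace x 1 S.1 ε), |B.indicator (fun _ => (1 : ℝ)) y| := by
        simp only [hface, ciInf_const]
    _ ≤ _ := le_skelMax hB x ⟨le_rfl, one_le_two⟩

/-- if `B = S_k(x₀,1)` is the `k`-skeleton of the axis-parallel cube
with center `x₀` and side length `2`, and `B_{6δ}` is its closed `6δ`-neighborhood in the
`ℓ∞` metric (the sup metric on `Fin n → ℝ`), then `M^k_δ 1_{B_{6δ}} (x) ≥ 1` whenever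
`‖x - x₀‖_∞ ≤ δ`. -/
theorem skelMax_indicator_thickened_skeleton (n k : ℕ) (hn : 2 ≤ n) (hk : k < n)
    (δ : ℝ) (hδ : δ ∈ Set.Ioo (0 : ℝ) 1) (x₀ : Fin n → ℝ) :
    ∀ x : Fin n → ℝ, dist x x₀ ≤ δ →
      1 ≤ skelMax n k δ
        ((cthickening (6 * δ) (skeleton n k x₀ 1)).indicator fun _ => (1 : ℝ)) x :=
  skelMax_indicator_thickened_skeleton_general n k δ hδ x₀
end
end
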